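/- arXiv:1108.3531 — 10 statements merged into one kernel-verified Lean document; each statement's English description precedes it below -/
import Mathlib

section
/- Let α, β, c be real parameters. For every natural number n and every real x ≠ 0, the operator L^{(α,β,c)} acts on the basis function Φ_n by (L^{(α,β,c)} Φ_n)(x) = λ_n Φ_n(x) + η_n Φ_{n-1}(x) (with the convention Φ_{-1} = 0), where λ_n = 2n if n is even and λ_n = −2(α+β+n+1) if n is odd, and η_n = 2(c−1)n if n is even and η_n = 2(c+1)(β+n) if n is odd. -/
noncomputable section

/-- The big -1 Jacobi operator `L^{(α,β,c)}`: acts on `f` at `x ≠ 0` by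
`g₀(x)(f(-x) - f(x)) - g₁(x) f'(-x)`, where the last term is `g₁(x)` times the
value at `x` of the derivative of the reflected function `t ↦ f (-t)`,
which equals `-f'(-x)`. -/
noncomputable def Lop (α β c : ℝ) (f : ℝ → ℝ) (x : ℝ) : ℝ :=
  ((α + β + 1) * x ^ 2 + (c * α - β) * x + c) / x ^ 2 * (f (-x) - f x)
    - (2 * (x - 1) * (x + c) / x) * deriv f (-x)

/-- The canonical polynomial basis `Φ_n`. -/
noncomputable def Phi (c : ℝ) (n : ℕ) (x : ℝ) : ℝ :=
  if Even n then (x ^ 2 - c ^ 2) ^ (n / 2)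
  else (x + c) * (x ^ 2 - c ^ 2) ^ ((n - 1) / 2)

/-!
Write `u = x² - c²`, so that `Φ_{2m} = u^m` and `Φ_{2m+1} = (x + c) u^m`. On `Φ_{2m}` the
difference term of `L` vanishes because `Φ_{2m}` is even, and the derivative term factors as
`4m (x - 1)(x + c) u^{m-1}`, which splits along `(x - 1) = (x - c) + (c - 1)` into multiples
of `Φ_{2m}` and `Φ_{2m-1}`. On `Φ_{2m+1}` both terms are multiples of `u^m = Φ_{2m}` and of
`(x + c) u^m = Φ_{2m+1}`; the poles at `x = 0` cancel because
`Φ_{2m+1}(-x) - Φ_{2m+1}(x) = -2x u^m`.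
-/

namespace Phi

theorem even_eq (c : ℝ) (m : ℕ) : Phi c (2 * m) = fun x => (x ^ 2 - c ^ 2) ^ m := by
  funext x
  simp [Phi]

theorem odd_eq (c : ℝ) (m : ℕ) :
    Phi c (2 * m + 1) = fun x => (x + c) * (x ^ 2 - c ^ 2) ^ m := by
  funext x
  simp [Phi, Nat.not_even_bit1]

end Phi

theorem hasDerivAt_sq_sub_sq_pow (c : ℝ) (m : ℕ) (x : ℝ) :
    HasDerivAt (fun x : ℝ => (x ^ 2 - c ^ 2) ^ m)
      (m * (x ^ 2 - c ^ 2) ^ (m - 1) * (2 * x)) x := by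
  simpa using ((hasDerivAt_pow 2 x).sub_const (c ^ 2)).fun_pow m

theorem natCast_mul_pow_pred_mul_self (a : ℝ) (m : ℕ) :
    (m : ℝ) * a ^ (m - 1) * a = m * a ^ m := by
  cases m with
  | zero => simp
  | succ k => simp [pow_succ, mul_assoc]

theorem Lop_Phi_zero (α β c x : ℝ) : Lop α β c (Phi c 0) x = 0 := by
  have hconst : Phi c 0 = fun _ => 1 := by simpa using Phi.even_eq c 0
  simp [Lop, hconst]

theorem Lop_Phi_even_succ (α β c : ℝ) (k : ℕ) {x : ℝ} (hx : x ≠ 0) :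
    Lop α β c (Phi c (2 * (k + 1))) x =
      4 * (k + 1) * Phi c (2 * (k + 1)) x + 4 * (c - 1) * (k + 1) * Phi c (2 * k + 1) x := by
  have hderiv := (hasDerivAt_sq_sub_sq_pow c (k + 1) (-x)).deriv
  rw [← Phi.even_eq] at hderiv
  rw [Lop, hderiv, Phi.even_eq, Phi.odd_eq]
  simp only [neg_sq, Nat.add_sub_cancel, sub_self, mul_zero, zero_sub]
  push_cast
  field_simp
  ring

theorem Lop_Phi_odd (α β c : ℝ) (m : ℕ) {x : ℝ} (hx : x ≠ 0) :
    Lop α β c (Phi c (2 * m + 1)) x =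
      -2 * (α + β + 2 * m + 2) * Phi c (2 * m + 1) x
        + 2 * (c + 1) * (β + 2 * m + 1) * Phi c (2 * m) x := by
  have hderiv : deriv (Phi c (2 * m + 1)) (-x) = ((-x) ^ 2 - c ^ 2) ^ m
      + (-x + c) * (m * ((-x) ^ 2 - c ^ 2) ^ (m - 1) * (2 * -x)) := by
    rw [Phi.odd_eq]
    simpa using (((hasDerivAt_id (-x)).add_const c).fun_mul
      (hasDerivAt_sq_sub_sq_pow c m (-x))).deriv
  have hpow := natCast_mul_pow_pred_mul_self (x ^ 2 - c ^ 2) m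
  rw [Lop, hderiv, Phi.even_eq, Phi.odd_eq]
  simp only [neg_sq]
  field_simp
  linear_combination 4 * x ^ 2 * (1 - x) * hpow

/-- The operator `L^{(α,β,c)}` is 2-diagonal lower-triangular on the basis `Φ_n`:
`L Φ_n = λ_n Φ_n + η_n Φ_{n-1}` (with the convention `Φ_{-1} = 0`, automatic here
since `η_0 = 0`), where `λ_n = 2n` for even `n`, `λ_n = -2(α+β+n+1)` for odd `n`,
and `η_n = 2(c-1)n` for even `n`, `η_n = 2(c+1)(β+n)` for odd `n`. -/
theorem L_on_Phi (α β c : ℝ) (n : ℕ) (x : ℝ) (hx : x ≠ 0) :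
    Lop α β c (Phi c n) x =
      (if Even n then 2 * (n : ℝ) else -2 * (α + β + n + 1)) * Phi c n x
        + (if Even n then 2 * (c - 1) * (n : ℝ) else 2 * (c + 1) * (β + n)) *
            Phi c (n - 1) x := by
  obtain ⟨m, rfl | rfl⟩ := Nat.even_or_odd' n
  · rw [if_pos (even_two_mul m), if_pos (even_two_mul m)]
    cases m with
    | zero => simp [Lop_Phi_zero]
    | succ k =>
      rw [Lop_Phi_even_succ α β c k hx, show 2 * (k + 1) - 1 = 2 * k + 1 by omega]
      push_cast
      ring
  · rw [if_neg (Nat.not_even_bit1 m), if_neg (Nat.not_even_bit1 m), Lop_Phi_odd α β c m hx,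
      Nat.add_sub_cancel]
    push_cast
    ring
end
end

section
/- Let α, β, c be real parameters. For every infinitely differentiable function f : ℝ → ℝ and every x ≠ 0, the anticommutator identity {X,Y} f = Z f + ω₃ f holds at x, i.e. X(Yf)(x) + Y(Xf)(x) = (Zf)(x) + 2(β−αc) f(x). -/
noncomputable section

/-- The operator `X = (1/2)(L^{(α,β,c)} + (α+β+1) I)`. -/
noncomputable def Xop (α β c : ℝ) (f : ℝ → ℝ) (x : ℝ) : ℝ :=
  (1 / 2) * (Lop α β c f x + (α + β + 1) * f x)

/-- The operator `Y`: multiplication by `2x`. -/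
noncomputable def Yop (f : ℝ → ℝ) (x : ℝ) : ℝ := 2 * x * f x

/-- The operator `Z`: `(Z f)(x) = -(2/x)(c f(x) + (x-1)(x+c) f(-x))`. -/
noncomputable def Zop (c : ℝ) (f : ℝ → ℝ) (x : ℝ) : ℝ :=
  -(2 / x) * (c * f x + (x - 1) * (x + c) * f (-x))

/-- The anticommutation relation `{X, Y} = Z + ω₃` with `ω₃ = 2(β - αc)`. -/
theorem anticomm_XY (α β c : ℝ) (f : ℝ → ℝ) (hf : ContDiff ℝ (⊤ : ℕ∞) f) (x : ℝ) (hx : x ≠ 0) :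
    Xop α β c (Yop f) x + Yop (Xop α β c f) x = Zop c f x + 2 * (β - α * c) * f x := by
  have hdf : Differentiable ℝ f := hf.differentiable (by simp)
  have hd : deriv (Yop f) (-x) = 2 * f (-x) + 2 * (-x) * deriv f (-x) := by
    have : Yop f = fun t => (2 * t) * f t := rfl
    rw [this, deriv_fun_mul (by fun_prop) (hdf (-x))]
    have : deriv (fun t : ℝ => 2 * t) (-x) = 2 := by
      rw [deriv_const_mul _ differentiable_id.differentiableAt, deriv_id'']; ring
    rw [this]
  simp only [Xop, Yop, Lop, Zop, hd, neg_neg]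
  field_simp
  ring
end
end

section
/- Let α, β, c be real parameters. For every infinitely differentiable function f : ℝ → ℝ and every x ≠ 0, the anticommutator identity {Z,X} f = Y f + ω₂ f holds at x, i.e. Z(Xf)(x) + X(Zf)(x) = 2x f(x) + 2(α−βc) f(x). -/
noncomputable section

lemma Zop_hasDerivAt (c : ℝ) (f : ℝ → ℝ) (hf : ContDiff ℝ (⊤ : ℕ∞) f) (y : ℝ) (hy : y ≠ 0) :
    HasDerivAt (Zop c f)
      ((2 / y ^ 2) * (c * f y + (y - 1) * (y + c) * f (-y))
        + (-(2 / y)) * (c * deriv f y + (2 * y + (c - 1)) * f (-y)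
            + (y - 1) * (y + c) * (-(deriv f (-y))))) y := by
  have hdf : ∀ t : ℝ, HasDerivAt f (deriv f t) t :=
    fun t => (hf.differentiable (by simp) t).hasDerivAt
  have h2 : HasDerivAt (fun t : ℝ => f (-t)) (-(deriv f (-y))) y := by
    have := (hdf (-y)).comp y (hasDerivAt_neg y)
    simp only [mul_neg, mul_one] at this
    exact this
  have hu : HasDerivAt (fun t : ℝ => -(2 / t)) (2 / y ^ 2) y := by
    have h := ((hasDerivAt_inv hy).const_mul (2 : ℝ)).neg
    have he : -(2 * -(y ^ 2)⁻¹) = 2 / y ^ 2 := by field_simp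
    rw [he] at h
    simp only [div_eq_mul_inv]
    exact h
  have hv : HasDerivAt (fun t : ℝ => c * f t + (t - 1) * (t + c) * f (-t))
      (c * deriv f y + (2 * y + (c - 1)) * f (-y)
        + (y - 1) * (y + c) * (-(deriv f (-y)))) y := by
    have hq : HasDerivAt (fun t : ℝ => (t - 1) * (t + c)) (2 * y + (c - 1)) y := by
      have := ((hasDerivAt_id y).sub_const 1).mul ((hasDerivAt_id y).add_const c)
      simp only [id_eq, one_mul, mul_one] at this
      exact this.congr_deriv (by ring)
    have := ((hdf y).const_mul c).add (hq.mul h2)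
    exact this.congr_deriv (by ring)
  have h := hu.mul hv
  unfold Zop
  exact h

/-- The anticommutation relation `{Z, X} = Y + ω₂` with `ω₂ = 2(α - βc)`. -/
theorem anticomm_ZX (α β c : ℝ) (f : ℝ → ℝ) (hf : ContDiff ℝ (⊤ : ℕ∞) f) (x : ℝ) (hx : x ≠ 0) :
    Zop c (Xop α β c f) x + Xop α β c (Zop c f) x = 2 * x * f x + 2 * (α - β * c) * f x := by
  have hnx : -x ≠ 0 := neg_ne_zero.mpr hx
  have hZd : deriv (Zop c f) (-x)
      = (2 / (-x) ^ 2) * (c * f (-x) + (-x - 1) * (-x + c) * f x)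
        + (-(2 / (-x))) * (c * deriv f (-x) + (2 * (-x) + (c - 1)) * f x
            + (-x - 1) * (-x + c) * (-(deriv f x))) := by
    have := (Zop_hasDerivAt c f hf (-x) hnx).deriv
    simpa [neg_neg] using this
  simp only [Zop, Xop, Yop, Lop, hZd, neg_neg]
  field_simp
  ring
end
end

section
/- Let α, β, c be real parameters. For every infinitely differentiable function f : ℝ → ℝ and every x ≠ 0, the intertwining operator J₊ satisfies the anticommutation relation {X, J₊} f = J₊ f at x, i.e. X(J₊ f)(x) + J₊(X f)(x) = (J₊ f)(x). -/
noncomputable section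

/-- The intertwining operator `J₊ = (Y+Z)(X - 1/2) - (ω₂+ω₃)/2`, with
`ω₂ = 2(α - βc)` and `ω₃ = 2(β - αc)`. -/
noncomputable def Jp (α β c : ℝ) (f : ℝ → ℝ) (x : ℝ) : ℝ :=
  Yop (fun t => Xop α β c f t - (1 / 2) * f t) x
    + Zop c (fun t => Xop α β c f t - (1 / 2) * f t) x
    - (2 * (α - β * c) + 2 * (β - α * c)) / 2 * f x

/-- The intertwining operator `J₋ = (Y-Z)(X + 1/2) + (ω₂-ω₃)/2`, with
`ω₂ = 2(α - βc)` and `ω₃ = 2(β - αc)`. -/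
noncomputable def Jm (α β c : ℝ) (f : ℝ → ℝ) (x : ℝ) : ℝ :=
  Yop (fun t => Xop α β c f t + (1 / 2) * f t) x
    - Zop c (fun t => Xop α β c f t + (1 / 2) * f t) x
    + (2 * (α - β * c) - 2 * (β - α * c)) / 2 * f x

/-- Explicit formula for the derivative of `Xop α β c f` at `y ≠ 0`,
in terms of `a = f y`, `b = f (-y)`, `a' = f' y`, `b' = f' (-y)`, `b'' = f'' (-y)`. -/
noncomputable def XD (α β c y a b a' b' b'' : ℝ) : ℝ :=
  (1/2) * (
    ((2*(α+β+1)*y + (c*α-β)) * y^2 - ((α+β+1)*y^2+(c*α-β)*y+c) * (2*y)) / (y^2)^2 * (b - a)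
    + ((α+β+1)*y^2+(c*α-β)*y+c) / y^2 * (-b' - a')
    - ((((2*(y+c) + 2*(y-1)) * y - 2*(y-1)*(y+c))) / y^2 * b'
        + (2*(y-1)*(y+c)) / y * (-b''))
    + (α+β+1) * a')

lemma hasDerivAt_Xop (α β c : ℝ) {f : ℝ → ℝ} (hf : ContDiff ℝ (⊤ : ℕ∞) f) {y : ℝ} (hy : y ≠ 0) :
    HasDerivAt (Xop α β c f)
      (XD α β c y (f y) (f (-y)) (deriv f y) (deriv f (-y)) (deriv (deriv f) (-y))) y := by
  have hf0 : ContDiff ℝ ((⊤:ℕ∞):WithTop ℕ∞) f := hf.of_le (by simp)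
  have hf1 : Differentiable ℝ f := hf0.differentiable (by simp)
  have hf2 : Differentiable ℝ (deriv f) := (hf0.iterate_deriv 1).differentiable (by simp)
  have ha : HasDerivAt f (deriv f y) y := (hf1 y).hasDerivAt
  have hb : HasDerivAt (fun t => f (-t)) (-(deriv f (-y))) y := by
    simpa [Function.comp_def] using ((hf1 (-y)).hasDerivAt).comp y (hasDerivAt_neg y)
  have hb' : HasDerivAt (fun t => deriv f (-t)) (-(deriv (deriv f) (-y))) y := by
    simpa [Function.comp_def] using ((hf2 (-y)).hasDerivAt).comp y (hasDerivAt_neg y)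
  have ht2 : HasDerivAt (fun t : ℝ => t ^ 2) (2*y) y := by simpa using hasDerivAt_pow 2 y
  have hP : HasDerivAt (fun t : ℝ => (α+β+1)*t^2+(c*α-β)*t+c) (2*(α+β+1)*y + (c*α-β)) y := by
    have h := ((ht2.const_mul (α+β+1)).add ((hasDerivAt_id y).const_mul (c*α-β))).add_const c
    convert h using 1 ; rfl ; rfl ; rfl ; ring
  have hQ : HasDerivAt (fun t : ℝ => 2*(t-1)*(t+c)) (2*(y+c) + 2*(y-1)) y := by
    have h2 : HasDerivAt (fun t : ℝ => 2*(t-1)) 2 y := by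
      simpa using ((hasDerivAt_id y).sub_const 1).const_mul 2
    have h := h2.mul ((hasDerivAt_id y).add_const c)
    convert h using 1 ; rfl ; rfl ; rfl ; simp only [id_eq] ; ring
  have hPd := hP.div ht2 (pow_ne_zero 2 hy)
  have hQd := hQ.div (hasDerivAt_id y) hy
  have h := (((hPd.mul (hb.sub ha)).sub (hQd.mul hb')).add (ha.const_mul (α+β+1))).const_mul (1/2)
  have hfun : Xop α β c f = fun t =>
      (1/2) * (((α+β+1)*t^2+(c*α-β)*t+c)/t^2 * (f (-t) - f t)
        - (2*(t-1)*(t+c)/t) * deriv f (-t) + (α+β+1) * f t) := by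
    funext t; simp [Xop, Lop]
  rw [hfun]
  convert h using 1
  rfl
  rfl
  rfl
  simp only [XD, id_eq, Pi.sub_apply, Pi.add_apply, Pi.mul_apply, Pi.div_apply]
  field_simp

lemma hasDerivAt_Jp (α β c : ℝ) {f : ℝ → ℝ} (hf : ContDiff ℝ (⊤ : ℕ∞) f) {y : ℝ} (hy : y ≠ 0) :
    HasDerivAt (Jp α β c f)
      (2 * (Xop α β c f y - (1/2) * f y)
        + 2 * y * (XD α β c y (f y) (f (-y)) (deriv f y) (deriv f (-y)) (deriv (deriv f) (-y))
            - (1/2) * deriv f y)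
        + (2 / y^2) * (c * (Xop α β c f y - (1/2) * f y)
            + (y-1) * (y+c) * (Xop α β c f (-y) - (1/2) * f (-y)))
        - (2 / y) * (c * (XD α β c y (f y) (f (-y)) (deriv f y) (deriv f (-y))
              (deriv (deriv f) (-y)) - (1/2) * deriv f y)
            + (2*y + c - 1) * (Xop α β c f (-y) - (1/2) * f (-y))
            - (y-1) * (y+c) * (XD α β c (-y) (f (-y)) (f y) (deriv f (-y)) (deriv f y)
              (deriv (deriv f) y) - (1/2) * deriv f (-y)))
        - (2 * (α - β * c) + 2 * (β - α * c)) / 2 * deriv f y) y := by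
  have hw : -y ≠ 0 := neg_ne_zero.mpr hy
  have hf0 : ContDiff ℝ ((⊤:ℕ∞):WithTop ℕ∞) f := hf.of_le (by simp)
  have hf1 : Differentiable ℝ f := hf0.differentiable (by simp)
  have hgy := (hasDerivAt_Xop α β c hf hy).sub (((hf1 y).hasDerivAt).const_mul (1/2))
  have hgny := (hasDerivAt_Xop α β c hf hw).sub (((hf1 (-y)).hasDerivAt).const_mul (1/2))
  simp only [neg_neg] at hgny
  have hgneg : HasDerivAt (fun t => Xop α β c f (-t) - (1/2) * f (-t))
      (-(XD α β c (-y) (f (-y)) (f y) (deriv f (-y)) (deriv f y) (deriv (deriv f) y)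
        - (1/2) * deriv f (-y))) y := by
    simpa [Function.comp_def] using hgny.comp y (hasDerivAt_neg y)
  have hA : HasDerivAt (fun t : ℝ => (t-1)*(t+c)) ((y+c) + (y-1)) y := by
    have h := ((hasDerivAt_id y).sub_const 1).mul ((hasDerivAt_id y).add_const c)
    convert h using 1 ; rfl ; rfl ; rfl ; simp only [id_eq] ; ring
  have h2a : HasDerivAt (fun t : ℝ => -(2/t)) (-((0*y - 2*1)/y^2)) y :=
    ((hasDerivAt_const y (2:ℝ)).div (hasDerivAt_id y) hy).neg
  have h1 := ((hasDerivAt_id y).const_mul 2).mul hgy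
  have inner := (hgy.const_mul c).add (hA.mul hgneg)
  have h3 := ((hf1 y).hasDerivAt).const_mul ((2 * (α - β * c) + 2 * (β - α * c)) / 2)
  have total := (h1.add (h2a.mul inner)).sub h3
  have hfun : Jp α β c f = fun t =>
      2 * t * (Xop α β c f t - (1/2) * f t)
        + -(2/t) * (c * (Xop α β c f t - (1/2) * f t)
            + (t-1) * (t+c) * (Xop α β c f (-t) - (1/2) * f (-t)))
        - (2 * (α - β * c) + 2 * (β - α * c)) / 2 * f t := by
    funext t; simp [Jp, Yop, Zop]
  rw [hfun]
  convert total using 1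
  rfl
  rfl
  rfl
  simp only [id_eq, Pi.sub_apply, Pi.add_apply, Pi.mul_apply, Pi.div_apply]
  field_simp
  ring

set_option maxHeartbeats 4000000 in
/-- The anticommutation relation `{X, J₊} = J₊`. -/
theorem anticomm_X_Jp (α β c : ℝ) (f : ℝ → ℝ) (hf : ContDiff ℝ (⊤ : ℕ∞) f) (x : ℝ) (hx : x ≠ 0) :
    Xop α β c (Jp α β c f) x + Jp α β c (Xop α β c f) x = Jp α β c f x := by
  have hw : -x ≠ 0 := neg_ne_zero.mpr hx
  have hXx := (hasDerivAt_Xop α β c hf hx).deriv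
  have hXw := (hasDerivAt_Xop α β c hf hw).deriv
  simp only [neg_neg] at hXw
  have hJw := (hasDerivAt_Jp α β c hf hw).deriv
  simp only [neg_neg] at hJw
  simp only [Xop, Lop, Jp, Yop, Zop, neg_neg]
  rw [hJw, hXx, hXw]
  simp only [Xop, Lop, XD, neg_neg]
  generalize f x = a
  generalize f (-x) = b
  generalize deriv f x = a1
  generalize deriv f (-x) = b1
  generalize deriv (deriv f) x = a2
  generalize deriv (deriv f) (-x) = b2
  field_simp
  ring
end
end

section
/- Let α, β, c be real parameters. For every infinitely differentiable function f : ℝ → ℝ and every x ≠ 0, the intertwining operator J₋ satisfies the anticommutation relation {X, J₋} f = −J₋ f at x, i.e. X(J₋ f)(x) + J₋(X f)(x) = −(J₋ f)(x). -/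
noncomputable section

/-- Derivative of a generic quintic polynomial. -/
private lemma poly5 (a₀ a₁ a₂ a₃ a₄ a₅ y : ℝ) :
    HasDerivAt (fun t : ℝ => a₅*t^5 + a₄*t^4 + a₃*t^3 + a₂*t^2 + a₁*t + a₀)
      (5*a₅*y^4 + 4*a₄*y^3 + 3*a₃*y^2 + 2*a₂*y + a₁) y := by
  have h := (((((((hasDerivAt_pow 5 y).const_mul a₅).add
      ((hasDerivAt_pow 4 y).const_mul a₄)).add
      ((hasDerivAt_pow 3 y).const_mul a₃)).add
      ((hasDerivAt_pow 2 y).const_mul a₂)).add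
      ((hasDerivAt_id y).const_mul a₁)).add_const a₀)
  refine h.congr_deriv ?_
  push_cast
  ring

/-- Derivative of a quintic divided by `t^n`. -/
private lemma ratpoly (a₀ a₁ a₂ a₃ a₄ a₅ : ℝ) (n : ℕ) (y : ℝ) (hy : y ≠ 0) :
    HasDerivAt (fun t : ℝ => (a₅*t^5 + a₄*t^4 + a₃*t^3 + a₂*t^2 + a₁*t + a₀) / t^n)
      (((5*a₅*y^4 + 4*a₄*y^3 + 3*a₃*y^2 + 2*a₂*y + a₁) * y^n
          - (a₅*y^5 + a₄*y^4 + a₃*y^3 + a₂*y^2 + a₁*y + a₀) * ((n : ℝ) * y^(n-1))) / (y^n)^2) y :=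
  (poly5 a₀ a₁ a₂ a₃ a₄ a₅ y).div (hasDerivAt_pow n y) (pow_ne_zero n hy)

/-- Derivative of a combination `P f + Q f∘neg + R f' + S f'∘neg`. -/
private lemma hasDerivAt_rep (f : ℝ → ℝ) (hf : ContDiff ℝ (⊤ : ℕ∞) f)
    (P Q R S : ℝ → ℝ) (P' Q' R' S' y : ℝ)
    (hP : HasDerivAt P P' y) (hQ : HasDerivAt Q Q' y)
    (hR : HasDerivAt R R' y) (hS : HasDerivAt S S' y) :
    HasDerivAt (fun t => P t * f t + Q t * f (-t) + R t * deriv f t + S t * deriv f (-t))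
      (P' * f y + P y * deriv f y + (Q' * f (-y) + Q y * -deriv f (-y))
        + (R' * deriv f y + R y * deriv (deriv f) y)
        + (S' * deriv f (-y) + S y * -deriv (deriv f) (-y))) y := by
  have h2' : ContDiff ℝ (⊤ : ℕ∞) f := hf.of_le (by simp)
  have hfd : Differentiable ℝ f := h2'.differentiable (by simp)
  have hdf : ContDiff ℝ ((⊤:ℕ∞) : WithTop ℕ∞) (deriv f) := (contDiff_infty_iff_deriv.mp h2').2
  have hdfd : Differentiable ℝ (deriv f) := hdf.differentiable (by simp)
  have h1 : HasDerivAt f (deriv f y) y := (hfd y).hasDerivAt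
  have h2 : HasDerivAt (fun t : ℝ => f (-t)) (-deriv f (-y)) y := by
    have := ((hfd (-y)).hasDerivAt).comp y (hasDerivAt_neg y)
    exact this.congr_deriv (by ring)
  have h3 : HasDerivAt (deriv f) (deriv (deriv f) y) y := (hdfd y).hasDerivAt
  have h4 : HasDerivAt (fun t : ℝ => deriv f (-t)) (-deriv (deriv f) (-y)) y := by
    have := ((hdfd (-y)).hasDerivAt).comp y (hasDerivAt_neg y)
    exact this.congr_deriv (by ring)
  exact (((hP.mul h1).add (hQ.mul h2)).add (hR.mul h3)).add (hS.mul h4)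

/-- Explicit rational representation of `Xop`. -/
private lemma Xop_rep (α β c : ℝ) (f : ℝ → ℝ) (y : ℝ) (hy : y ≠ 0) :
    Xop α β c f y =
      ((0:ℝ)*y^5 + 0*y^4 + 0*y^3 + 0*y^2 + ((β - α*c)/2)*y + (-(c/2))) / y^2 * f y
      + ((0:ℝ)*y^5 + 0*y^4 + 0*y^3 + ((1+α+β)/2)*y^2 + ((α*c - β)/2)*y + c/2) / y^2 * f (-y)
      + ((0:ℝ)*y^5 + 0*y^4 + 0*y^3 + 0*y^2 + 0*y + 0) / y^2 * deriv f y
      + ((0:ℝ)*y^5 + 0*y^4 + (-1)*y^3 + (1-c)*y^2 + c*y + 0) / y^2 * deriv f (-y) := by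
  simp only [Xop, Lop]
  field_simp
  ring

set_option maxHeartbeats 2000000 in
/-- Explicit rational representation of `Jm`. -/
private lemma Jm_rep (α β c : ℝ) (f : ℝ → ℝ) (y : ℝ) (hy : y ≠ 0) :
    Jm α β c f y =
      ((0:ℝ)*y^5 + (2+α+β)*y^4 + (c-1)*y^3 + (-(β+α*c^2))*y^2 + (c^2-c)*y + (-(2*c^2))) / y^3 * f y
      + ((0:ℝ)*y^5 + (2+α+β)*y^4 + (c-1-2*β+2*α*c)*y^3 + (β+α*c^2)*y^2 + (c-c^2)*y + 2*c^2) / y^3 * f (-y)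
      + ((2:ℝ)*y^5 + 0*y^4 + (-(2+2*c^2))*y^3 + 0*y^2 + 2*c^2*y + 0) / y^3 * deriv f y
      + ((-2:ℝ)*y^5 + (2-2*c)*y^4 + 0*y^3 + (2*c-2*c^2)*y^2 + 2*c^2*y + 0) / y^3 * deriv f (-y) := by
  have hy' : -y ≠ 0 := neg_ne_zero.mpr hy
  simp only [Jm, Yop, Zop, Xop, Lop, neg_neg]
  field_simp
  ring

set_option maxHeartbeats 4000000 in
/-- The anticommutation relation `{X, J₋} = -J₋`. -/
theorem anticomm_X_Jm (α β c : ℝ) (f : ℝ → ℝ) (hf : ContDiff ℝ (⊤ : ℕ∞) f) (x : ℝ) (hx : x ≠ 0) :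
    Xop α β c (Jm α β c f) x + Jm α β c (Xop α β c f) x = -(Jm α β c f x) := by
  have hx' : (-x : ℝ) ≠ 0 := neg_ne_zero.mpr hx
  -- derivative of `Jm f` at `-x`
  have hD1 := hasDerivAt_rep f hf _ _ _ _ _ _ _ _ (-x)
      (ratpoly (-(2*c^2)) (c^2-c) (-(β+α*c^2)) (c-1) (2+α+β) 0 3 (-x) hx')
      (ratpoly (2*c^2) (c-c^2) (β+α*c^2) (c-1-2*β+2*α*c) (2+α+β) 0 3 (-x) hx')
      (ratpoly 0 (2*c^2) 0 (-(2+2*c^2)) 0 2 3 (-x) hx')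
      (ratpoly 0 (2*c^2) (2*c-2*c^2) 0 (2-2*c) (-2) 3 (-x) hx')
  have hJ1 := hD1.congr_of_eventuallyEq (by
    filter_upwards [eventually_ne_nhds hx'] with t ht
    exact Jm_rep α β c f t ht)
  have eJ1 := hJ1.deriv
  -- derivative of `Xop f` at `x` and `-x`
  have hD2 := hasDerivAt_rep f hf _ _ _ _ _ _ _ _ x
      (ratpoly (-(c/2)) ((β - α*c)/2) 0 0 0 0 2 x hx)
      (ratpoly (c/2) ((α*c - β)/2) ((1+α+β)/2) 0 0 0 2 x hx)
      (ratpoly 0 0 0 0 0 0 2 x hx)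
      (ratpoly 0 c (1-c) (-1) 0 0 2 x hx)
  have hX1 := hD2.congr_of_eventuallyEq (by
    filter_upwards [eventually_ne_nhds hx] with t ht
    exact Xop_rep α β c f t ht)
  have eX1 := hX1.deriv
  have hD3 := hasDerivAt_rep f hf _ _ _ _ _ _ _ _ (-x)
      (ratpoly (-(c/2)) ((β - α*c)/2) 0 0 0 0 2 (-x) hx')
      (ratpoly (c/2) ((α*c - β)/2) ((1+α+β)/2) 0 0 0 2 (-x) hx')
      (ratpoly 0 0 0 0 0 0 2 (-x) hx')
      (ratpoly 0 c (1-c) (-1) 0 0 2 (-x) hx')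
  have hX2 := hD3.congr_of_eventuallyEq (by
    filter_upwards [eventually_ne_nhds hx'] with t ht
    exact Xop_rep α β c f t ht)
  have eX2 := hX2.deriv
  rw [Xop_rep α β c (Jm α β c f) x hx, Jm_rep α β c (Xop α β c f) x hx,
    Jm_rep α β c f x hx, Jm_rep α β c f (-x) hx', eJ1,
    Xop_rep α β c f x hx, Xop_rep α β c f (-x) hx', eX1, eX2]
  simp only [neg_neg]
  push_cast
  norm_num
  field_simp
  ring
end
end

section
/- Let α, β, c be real parameters. For every infinitely differentiable function f : ℝ → ℝ and every x ≠ 0, the operator V = J₊(X + 1/2) + J₋(X − 1/2) satisfies the identity (V f)(x) = 2Y((X² − 1/4)f)(x) − ω₃ (Xf)(x) − (ω₂/2) f(x), where ω₂ = 2(α−βc) and ω₃ = 2(β−αc). -/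
noncomputable section

lemma diff_Xop (α β c : ℝ) (f : ℝ → ℝ) (hf : ContDiff ℝ (⊤ : ℕ∞) f) {y : ℝ} (hy : y ≠ 0) :
    DifferentiableAt ℝ (Xop α β c f) y := by
  have hinf : ContDiff ℝ ((⊤ : ℕ∞) : WithTop ℕ∞) f := hf.of_le (by simp)
  have hd : Differentiable ℝ f := hinf.differentiable (by simp)
  have hd' : Differentiable ℝ (deriv f) :=
    (contDiff_infty_iff_deriv.mp hinf).2.differentiable (by simp)
  unfold Xop Lop
  have h2 : y ^ 2 ≠ 0 := pow_ne_zero _ hy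
  fun_prop (disch := assumption)

lemma Xop_linear_add (α β c a : ℝ) (f g : ℝ → ℝ) {y : ℝ}
    (hg : DifferentiableAt ℝ g (-y)) (hfd : DifferentiableAt ℝ f (-y)) :
    Xop α β c (fun t => g t + a * f t) y = Xop α β c g y + a * Xop α β c f y := by
  unfold Xop Lop
  rw [deriv_fun_add hg (hfd.const_mul a), deriv_const_mul a hfd]
  ring

lemma Xop_linear_sub (α β c a : ℝ) (f g : ℝ → ℝ) {y : ℝ}
    (hg : DifferentiableAt ℝ g (-y)) (hfd : DifferentiableAt ℝ f (-y)) :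
    Xop α β c (fun t => g t - a * f t) y = Xop α β c g y - a * Xop α β c f y := by
  unfold Xop Lop
  rw [deriv_fun_sub hg (hfd.const_mul a), deriv_const_mul a hfd]
  ring

/-- The operator `V = J₊(X + 1/2) + J₋(X - 1/2)` satisfies
`V = 2Y(X² - 1/4) - ω₃ X - ω₂/2`, with `ω₂ = 2(α - βc)` and `ω₃ = 2(β - αc)`. -/
theorem V_identity (α β c : ℝ) (f : ℝ → ℝ) (hf : ContDiff ℝ (⊤ : ℕ∞) f) (x : ℝ) (hx : x ≠ 0) :
    Jp α β c (fun t => Xop α β c f t + (1 / 2) * f t) x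
      + Jm α β c (fun t => Xop α β c f t - (1 / 2) * f t) x
    = 2 * Yop (fun t => Xop α β c (Xop α β c f) t - (1 / 4) * f t) x
        - 2 * (β - α * c) * Xop α β c f x - (2 * (α - β * c)) / 2 * f x := by
  have hnx : -x ≠ 0 := neg_ne_zero.mpr hx
  have hd : Differentiable ℝ f :=
    (hf.of_le (le_refl (((⊤:ℕ∞)) : WithTop ℕ∞))).differentiable (by simp)
  have hX1 : DifferentiableAt ℝ (Xop α β c f) (-x) := diff_Xop α β c f hf hnx
  have hX2 : DifferentiableAt ℝ (Xop α β c f) (-(-x)) := by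
    rw [neg_neg]; exact diff_Xop α β c f hf hx
  have hf1 : DifferentiableAt ℝ f (-x) := hd _
  have hf2 : DifferentiableAt ℝ f (-(-x)) := hd _
  simp only [Jp, Jm, Yop, Zop]
  rw [Xop_linear_add α β c (1/2) f (Xop α β c f) hX1 hf1,
      Xop_linear_add α β c (1/2) f (Xop α β c f) hX2 hf2,
      Xop_linear_sub α β c (1/2) f (Xop α β c f) hX1 hf1,
      Xop_linear_sub α β c (1/2) f (Xop α β c f) hX2 hf2]
  ring
end
end

section
/- Let α, β, c be real parameters. For every real polynomial p there exists a real polynomial q with deg q ≤ deg p such that for every x ≠ 0, (L^{(α,β,c)} p)(x) = q(x); that is, the operator L^{(α,β,c)} maps polynomials to polynomials without increasing the degree. -/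
/-!
Clearing the denominator, `x² (L p)(x)` is the value at `x` of the polynomial
`N = A · (p(-X) - p) - B · p'(-X)` with `A = (α+β+1)X² + (cα-β)X + c` and
`B = 2(X-1)(X+c)X`, and `deg N ≤ deg p + 2` because `deg (X p') ≤ deg p`.
Moreover `N(0) = c (p(0) - p(0)) = 0` and `N'(0) = -2c p'(0) + 2c p'(0) = 0`, so `N = X² q`
with `deg q ≤ deg p`, and `q` represents `L p` away from `0`.
-/

noncomputable section

open Polynomial

namespace Polynomial

variable {R : Type*}

theorem degree_derivative_add_one_le [Semiring R] (p : R[X]) :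
    p.derivative.degree + 1 ≤ p.degree := by
  rcases eq_or_ne p 0 with rfl | hp
  · simp
  · exact Nat.WithBot.add_one_le_of_lt (degree_derivative_lt hp)

theorem X_sq_dvd_of_eval_zero_of_derivative_eval_zero [Semiring R] {f : R[X]}
    (h₀ : f.eval 0 = 0) (h₁ : f.derivative.eval 0 = 0) : X ^ 2 ∣ f := by
  refine X_pow_dvd_iff.2 fun d hd => ?_
  interval_cases d
  · rwa [coeff_zero_eq_eval_zero]
  · simpa [← coeff_zero_eq_eval_zero, coeff_derivative] using h₁

theorem degree_le_of_degree_X_pow_mul_le [Semiring R] [Nontrivial R] {q : R[X]}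
    {d : WithBot ℕ} {n : ℕ} (h : (X ^ n * q).degree ≤ d + n) : q.degree ≤ d := by
  rw [(commute_X_pow q n).eq, degree_mul_X_pow] at h
  exact (WithBot.add_le_add_iff_right (WithBot.natCast_ne_bot n)).1 h

end Polynomial

def lopNumerator (α β c : ℝ) (p : ℝ[X]) : ℝ[X] :=
  (C (α + β + 1) * X ^ 2 + C (c * α - β) * X + C c) * (p.comp (-X) - p)
    - C 2 * (X - 1) * (X + C c) * (X * p.derivative.comp (-X))

theorem Lop_eval_eq_lopNumerator_div (α β c : ℝ) (p : ℝ[X]) {x : ℝ} (hx : x ≠ 0) :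
    Lop α β c (fun t => p.eval t) x = (lopNumerator α β c p).eval x / x ^ 2 := by
  simp only [Lop, Polynomial.deriv, lopNumerator, eval_sub, eval_mul, eval_add, eval_pow,
    eval_C, eval_X, eval_comp, eval_neg, eval_one]
  field_simp

theorem degree_lopNumerator_le (α β c : ℝ) (p : ℝ[X]) :
    (lopNumerator α β c p).degree ≤ p.degree + 2 := by
  have hA : (C (α + β + 1) * X ^ 2 + C (c * α - β) * X + C c).degree ≤ 2 := by compute_degree
  have hB : (C 2 * (X - 1) * (X + C c)).degree ≤ 2 := by compute_degree
  have hreflect : (p.comp (-X) - p).degree ≤ p.degree :=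
    (degree_sub_le _ _).trans (by simp)
  have hderiv : (X * p.derivative.comp (-X)).degree ≤ p.degree := by
    rw [X_mul, degree_mul_X, degree_comp_neg_X]
    exact degree_derivative_add_one_le p
  rw [add_comm]
  refine (degree_sub_le _ _).trans (max_le ?_ ?_) <;> refine (degree_mul_le _ _).trans ?_
  · exact add_le_add hA hreflect
  · exact add_le_add hB hderiv

theorem X_sq_dvd_lopNumerator (α β c : ℝ) (p : ℝ[X]) : X ^ 2 ∣ lopNumerator α β c p := by
  apply X_sq_dvd_of_eval_zero_of_derivative_eval_zero
  · simp [lopNumerator]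
  · simp [lopNumerator, derivative_comp]
    ring

/-- The operator `L^{(α,β,c)}` maps polynomials to polynomials without
increasing the degree. -/
theorem L_preserves_polynomials (α β c : ℝ) (p : Polynomial ℝ) :
    ∃ q : Polynomial ℝ, q.degree ≤ p.degree ∧
      ∀ x : ℝ, x ≠ 0 → Lop α β c (fun t => p.eval t) x = q.eval x := by
  obtain ⟨q, hq⟩ := X_sq_dvd_lopNumerator α β c p
  refine ⟨q, ?_, fun x hx => ?_⟩
  · apply degree_le_of_degree_X_pow_mul_le (n := 2)
    rw [← hq]
    exact_mod_cast degree_lopNumerator_le α β c p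
  · rw [Lop_eval_eq_lopNumerator_div α β c p hx, hq, eval_mul, eval_pow, eval_X,
      mul_div_cancel_left₀ _ (pow_ne_zero 2 hx)]
end
end

section
/- Let α, β, c be real parameters. For every infinitely differentiable function f : ℝ → ℝ and every x ≠ 0, the intertwining relation L^{(α+2,β,c)}(𝔇 f)(x) + 𝔇(L^{(α,β,c)} f)(x) + 2(α+β+2)(𝔇 f)(x) = 0 holds. -/
noncomputable section

/-- The generalized Dunkl operator `𝔇`: acts on `f` at `x ≠ 0` by
`A(x)(f(x) - f(-x)) + B(x) f'(x) - C(x) f'(-x)` (the last term being `C(x)` times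
minus the value at `x` of the derivative of the reflection `t ↦ f (-t)`). -/
noncomputable def Dop (β c : ℝ) (f : ℝ → ℝ) (x : ℝ) : ℝ :=
  (c ^ 2 / x ^ 3 - c * (c - 1) / (2 * x ^ 2) + β * (c + 1) / (2 * x)) * (f x - f (-x))
    + ((x ^ 2 - c ^ 2) / x ^ 2) * deriv f x
    - (c * (x + c) * (1 - x) / x ^ 2) * deriv f (-x)

/-- Derivative of a reflection. -/
lemma hasDerivAt_reflect (g : ℝ → ℝ) (hg : Differentiable ℝ g) (y : ℝ) :
    HasDerivAt (fun t => g (-t)) (-(deriv g (-y))) y := by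
  have h := ((hg (-y)).hasDerivAt).comp y (hasDerivAt_neg y)
  simpa [mul_comm, Function.comp_def] using h

lemma hasDerivAt_Dop (β c : ℝ) (f : ℝ → ℝ) (hf : ContDiff ℝ (⊤ : ℕ∞) f) {y : ℝ} (hy : y ≠ 0) :
    HasDerivAt (Dop β c f)
      ((-3 * c ^ 2 / y ^ 4 + c * (c - 1) / y ^ 3 - β * (c + 1) / (2 * y ^ 2)) * (f y - f (-y))
        + (c ^ 2 / y ^ 3 - c * (c - 1) / (2 * y ^ 2) + β * (c + 1) / (2 * y))
            * (deriv f y + deriv f (-y))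
        + (2 * c ^ 2 / y ^ 3) * deriv f y + ((y ^ 2 - c ^ 2) / y ^ 2) * deriv (deriv f) y
        - ((c * ((c - 1) * y - 2 * c) / y ^ 3) * deriv f (-y)
            - (c * (y + c) * (1 - y) / y ^ 2) * deriv (deriv f) (-y))) y := by
  have hdf : Differentiable ℝ f := hf.differentiable (by simp)
  have hf2 : ContDiff ℝ (⊤ : ℕ∞) f := hf.of_le (by simp)
  have hdf' : Differentiable ℝ (deriv f) :=
    ((contDiff_infty_iff_deriv.mp hf2).2).differentiable (by simp)
  have hGa := (hasDerivAt_const y (c ^ 2)).div (hasDerivAt_pow 3 y) (pow_ne_zero 3 hy)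
  have hGb := (hasDerivAt_const y (c * (c - 1))).div ((hasDerivAt_pow 2 y).const_mul 2)
    (mul_ne_zero two_ne_zero (pow_ne_zero 2 hy))
  have hGc := (hasDerivAt_const y (β * (c + 1))).div ((hasDerivAt_id y).const_mul 2)
    (mul_ne_zero two_ne_zero hy)
  have hG := (hGa.sub hGb).add hGc
  have hT1 := hG.mul ((hdf y).hasDerivAt.sub (hasDerivAt_reflect f hdf y))
  have hH := ((hasDerivAt_pow 2 y).sub_const (c ^ 2)).div (hasDerivAt_pow 2 y) (pow_ne_zero 2 hy)
  have hT2 := hH.mul (hdf' y).hasDerivAt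
  have hK := ((((hasDerivAt_id y).add_const c).const_mul c).mul
    ((hasDerivAt_id y).const_sub 1)).div (hasDerivAt_pow 2 y) (pow_ne_zero 2 hy)
  have hT3 := hK.mul (hasDerivAt_reflect (deriv f) hdf' y)
  have H0 : HasDerivAt (Dop β c f) _ y := (hT1.add hT2).sub hT3
  convert H0 using 1
  simp only [Pi.add_apply, Pi.sub_apply, Pi.mul_apply, Pi.div_apply, id_eq]
  push_cast
  field_simp
  ring

lemma hasDerivAt_Lop (α β c : ℝ) (f : ℝ → ℝ) (hf : ContDiff ℝ (⊤ : ℕ∞) f) {y : ℝ} (hy : y ≠ 0) :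
    HasDerivAt (Lop α β c f)
      (((-(c * α - β) * y - 2 * c) / y ^ 3) * (f (-y) - f y)
        + (((α + β + 1) * y ^ 2 + (c * α - β) * y + c) / y ^ 2)
            * (-(deriv f (-y)) - deriv f y)
        - (((2 * y ^ 2 + 2 * c) / y ^ 2) * deriv f (-y)
            - (2 * (y - 1) * (y + c) / y) * deriv (deriv f) (-y))) y := by
  have hdf : Differentiable ℝ f := hf.differentiable (by simp)
  have hf2 : ContDiff ℝ (⊤ : ℕ∞) f := hf.of_le (by simp)
  have hdf' : Differentiable ℝ (deriv f) :=
    ((contDiff_infty_iff_deriv.mp hf2).2).differentiable (by simp)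
  have hP : HasDerivAt (fun y : ℝ => (α + β + 1) * y ^ 2 + (c * α - β) * y + c)
      ((α + β + 1) * (2 * y) + (c * α - β)) y := by
    have : HasDerivAt (fun y : ℝ => (α + β + 1) * y ^ 2 + (c * α - β) * y + c) _ y := (((hasDerivAt_pow 2 y).const_mul (α + β + 1)).add
      ((hasDerivAt_id y).const_mul (c * α - β))).add_const c
    convert this using 1
    push_cast; ring
  have hG := hP.div (hasDerivAt_pow 2 y) (pow_ne_zero 2 hy)
  have hT1 := hG.mul ((hasDerivAt_reflect f hdf y).sub (hdf y).hasDerivAt)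
  have hKnum : HasDerivAt (fun y : ℝ => 2 * (y - 1) * (y + c))
      (2 * (y - 1) + 2 * (y + c)) y := by
    have : HasDerivAt (fun y : ℝ => 2 * (y - 1) * (y + c)) _ y := (((hasDerivAt_id y).sub_const 1).const_mul 2).mul ((hasDerivAt_id y).add_const c)
    convert this using 1
    simp only [id_eq]; ring
  have hK := hKnum.div (hasDerivAt_id y) hy
  have hT2 := hK.mul (hasDerivAt_reflect (deriv f) hdf' y)
  have H0 : HasDerivAt (Lop α β c f) _ y := hT1.sub hT2
  convert H0 using 1
  simp only [Pi.add_apply, Pi.sub_apply, Pi.mul_apply, Pi.div_apply, id_eq]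
  push_cast
  field_simp
  ring

set_option maxHeartbeats 1600000 in
/-- The intertwining relation
`L^{(α+2,β,c)} 𝔇 + 𝔇 L^{(α,β,c)} + 2(α+β+2) 𝔇 = 0`. -/
theorem LD_intertwining (α β c : ℝ) (f : ℝ → ℝ) (hf : ContDiff ℝ (⊤ : ℕ∞) f)
    (x : ℝ) (hx : x ≠ 0) :
    Lop (α + 2) β c (Dop β c f) x + Dop β c (Lop α β c f) x
      + 2 * (α + β + 2) * Dop β c f x = 0 := by
  have hx' : (-x) ≠ 0 := neg_ne_zero.mpr hx
  have e1 := (hasDerivAt_Dop β c f hf hx').deriv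
  have e2 := (hasDerivAt_Lop α β c f hf hx).deriv
  have e3 := (hasDerivAt_Lop α β c f hf hx').deriv
  simp only [Lop, Dop, e1, e2, e3, neg_neg]
  field_simp
  ring
end
end

section
/- Let α, β, c, λ be real numbers and let ψ : ℝ → ℝ be infinitely differentiable. If (L^{(α,β,c)} ψ)(x) = λ ψ(x) for all x ≠ 0, then the function ψ̃ = 𝔇 ψ satisfies (L^{(α+2,β,c)} ψ̃)(x) = (−λ − 2(α+β+2)) ψ̃(x) for all x ≠ 0. -/
noncomputable section

/-- Derivative of a reflected differentiable function. -/
lemma hcomp_neg (f : ℝ → ℝ) (hf : Differentiable ℝ f) (y : ℝ) :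
    HasDerivAt (fun z : ℝ => f (-z)) (-(deriv f (-y))) y := by
  have h := ((hf (-y)).hasDerivAt).comp y (hasDerivAt_neg y)
  simpa [Function.comp_def] using h

set_option maxHeartbeats 2000000 in
/-- If `ψ` is an eigenfunction of `L^{(α,β,c)}` with eigenvalue `λ`, then
`𝔇 ψ` is an eigenfunction of `L^{(α+2,β,c)}` with eigenvalue `-λ - 2(α+β+2)`. -/
theorem D_maps_eigenfunctions (α β c lam : ℝ) (ψ : ℝ → ℝ) (hψ : ContDiff ℝ (⊤ : ℕ∞) ψ)
    (heig : ∀ x : ℝ, x ≠ 0 → Lop α β c ψ x = lam * ψ x) :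
    ∀ x : ℝ, x ≠ 0 →
      Lop (α + 2) β c (Dop β c ψ) x = (-lam - 2 * (α + β + 2)) * Dop β c ψ x := by
  intro x hx
  have hxn : (-x : ℝ) ≠ 0 := neg_ne_zero.mpr hx
  have hψd : Differentiable ℝ ψ := hψ.differentiable (by simp)
  have hψ2 : Differentiable ℝ (deriv ψ) :=
    (contDiff_infty_iff_deriv.mp (hψ.of_le (by simp))).2.differentiable (by simp)
  -- cleared-denominator eigen equation
  have hQ : ∀ y : ℝ, y ≠ 0 →
      ((α+β+1)*y^2+(c*α-β)*y+c) * (ψ (-y) - ψ y)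
        - (2*(y-1)*(y+c)*y) * deriv ψ (-y) - lam * y^2 * ψ y = 0 := by
    intro y hy
    have h := heig y hy
    unfold Lop at h
    field_simp at h
    linear_combination h
  have h1 := hQ x hx
  have h2 := hQ (-x) hxn
  rw [neg_neg] at h2
  -- derivative of the cleared eigen equation
  have hQder : ∀ y : ℝ,
      HasDerivAt (fun z : ℝ => ((α+β+1)*z^2+(c*α-β)*z+c) * (ψ (-z) - ψ z)
          - (2*(z-1)*(z+c)*z) * deriv ψ (-z) - lam * z^2 * ψ z)
        ((2*(α+β+1)*y + (c*α-β)) * (ψ (-y) - ψ y)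
          + ((α+β+1)*y^2+(c*α-β)*y+c) * (-(deriv ψ (-y)) - deriv ψ y)
          - ((6*y^2 + 4*(c-1)*y - 2*c) * deriv ψ (-y)
              + (2*(y-1)*(y+c)*y) * (-(deriv (deriv ψ) (-y))))
          - lam * (2*y*(ψ y) + y^2 * deriv ψ y)) y := by
    intro y
    have hP1 : HasDerivAt (fun z : ℝ => (α+β+1)*z^2+(c*α-β)*z+c)
        (2*(α+β+1)*y + (c*α-β)) y := by
      have h := (((hasDerivAt_pow 2 y).const_mul (α+β+1)).add
        ((hasDerivAt_id' y).const_mul (c*α-β))).add_const c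
      refine h.congr_deriv ?_
      push_cast; ring
    have hP2 : HasDerivAt (fun z : ℝ => 2*(z-1)*(z+c)*z)
        (6*y^2 + 4*(c-1)*y - 2*c) y := by
      have h := ((((hasDerivAt_id' y).sub_const 1).const_mul 2).mul
        ((hasDerivAt_id' y).add_const c)).mul (hasDerivAt_id' y)
      refine h.congr_deriv ?_
      simp only [Pi.mul_apply]; ring
    have hsub : HasDerivAt (fun z : ℝ => ψ (-z) - ψ z)
        (-(deriv ψ (-y)) - deriv ψ y) y :=
      (hcomp_neg ψ hψd y).sub ((hψd y).hasDerivAt)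
    have hdpn : HasDerivAt (fun z : ℝ => deriv ψ (-z)) (-(deriv (deriv ψ) (-y))) y :=
      hcomp_neg (deriv ψ) hψ2 y
    have hlam : HasDerivAt (fun z : ℝ => lam * z^2 * ψ z)
        (lam * (2*y*(ψ y) + y^2 * deriv ψ y)) y := by
      have h := ((hasDerivAt_pow 2 y).const_mul lam).mul ((hψd y).hasDerivAt)
      refine h.congr_deriv ?_
      push_cast; ring
    exact ((hP1.mul hsub).sub (hP2.mul hdpn)).sub hlam
  have hQzero : ∀ y : ℝ, y ≠ 0 →
      (2*(α+β+1)*y + (c*α-β)) * (ψ (-y) - ψ y)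
        + ((α+β+1)*y^2+(c*α-β)*y+c) * (-(deriv ψ (-y)) - deriv ψ y)
        - ((6*y^2 + 4*(c-1)*y - 2*c) * deriv ψ (-y)
            + (2*(y-1)*(y+c)*y) * (-(deriv (deriv ψ) (-y))))
        - lam * (2*y*(ψ y) + y^2 * deriv ψ y) = 0 := by
    intro y hy
    have hev : (fun z : ℝ => ((α+β+1)*z^2+(c*α-β)*z+c) * (ψ (-z) - ψ z)
        - (2*(z-1)*(z+c)*z) * deriv ψ (-z) - lam * z^2 * ψ z) =ᶠ[nhds y]
        (fun _ => (0:ℝ)) := by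
      have hmem : {t : ℝ | t ≠ 0} ∈ nhds y :=
        isOpen_ne.mem_nhds hy
      filter_upwards [hmem] with z hz using hQ z hz
    have hd := (hQder y).deriv
    rw [hev.deriv_eq, deriv_const] at hd
    exact hd.symm
  have h3 := hQzero x hx
  have h4 := hQzero (-x) hxn
  simp only [neg_neg] at h4
  -- derivative of Dop at -x
  have t1 := (hasDerivAt_const (-x) (c^2)).div (hasDerivAt_pow 3 (-x)) (pow_ne_zero 3 hxn)
  have t2 := (hasDerivAt_const (-x) (c*(c-1))).div ((hasDerivAt_pow 2 (-x)).const_mul 2)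
    (mul_ne_zero two_ne_zero (pow_ne_zero 2 hxn))
  have t3 := (hasDerivAt_const (-x) (β*(c+1))).div ((hasDerivAt_id' (-x)).const_mul 2)
    (mul_ne_zero two_ne_zero hxn)
  have hA := (t1.sub t2).add t3
  have hu := (hψd (-x)).hasDerivAt
  have hun := hcomp_neg ψ hψd (-x)
  have hB := ((hasDerivAt_pow 2 (-x)).sub_const (c^2)).div (hasDerivAt_pow 2 (-x))
    (pow_ne_zero 2 hxn)
  have hv' := (hψ2 (-x)).hasDerivAt
  have hCn := (((hasDerivAt_id' (-x)).add_const c).const_mul c).mul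
    ((hasDerivAt_id' (-x)).const_sub 1)
  have hC := hCn.div (hasDerivAt_pow 2 (-x)) (pow_ne_zero 2 hxn)
  have hw := hcomp_neg (deriv ψ) hψ2 (-x)
  have hD := ((hA.mul (hu.sub hun)).add (hB.mul hv')).sub (hC.mul hw)
  have hfun : Dop β c ψ = fun x : ℝ =>
      (c ^ 2 / x ^ 3 - c * (c - 1) / (2 * x ^ 2) + β * (c + 1) / (2 * x)) * (ψ x - ψ (-x))
        + ((x ^ 2 - c ^ 2) / x ^ 2) * deriv ψ x
        - (c * (x + c) * (1 - x) / x ^ 2) * deriv ψ (-x) := rfl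
  rw [hfun]
  simp only [Lop]
  rw [show deriv (fun x : ℝ =>
      (c ^ 2 / x ^ 3 - c * (c - 1) / (2 * x ^ 2) + β * (c + 1) / (2 * x)) * (ψ x - ψ (-x))
        + ((x ^ 2 - c ^ 2) / x ^ 2) * deriv ψ x
        - (c * (x + c) * (1 - x) / x ^ 2) * deriv ψ (-x)) (-x) = _ from hD.deriv]
  simp only [neg_neg, Pi.add_apply, Pi.sub_apply, Pi.mul_apply, Pi.div_apply]
  linear_combination (norm := (field_simp; ring1))
    ((-6*c^2 + (c^2-c)*x + (4-β-β*c)*x^2)/(2*x^5)) * h1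
    + ((6*c^2 + (5*c-5*c^2)*x + (β+β*c-4*c)*x^2)/(2*x^5)) * h2
    + ((c^2-x^2)/x^4) * h3
    + ((c^2 + (c-c^2)*x - c*x^2)/x^4) * h4
end
end

section
/- Let α, β, c be real parameters. For every infinitely differentiable function f : ℝ → ℝ and every x ≠ 0, the intertwining relation L^{(α−2,β,c)}(𝔕 f)(x) + 𝔕(L^{(α,β,c)} f)(x) + 2(α+β)(𝔕 f)(x) = 0 holds, where 𝔕 is the raising operator. -/
noncomputable section

/-- The raising operator `𝔕`: acts on `f` at `x ≠ 0` by
`S₁(x) f(x) + S₂(x) f(-x) + T₁(x) f'(x) - T₂(x) f'(-x)`. -/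
noncomputable def Rop (α β c : ℝ) (f : ℝ → ℝ) (x : ℝ) : ℝ :=
  ((β * c - β - 2 * α) * x - (c + 2) * (c - 1)
      + (β - 2 * c ^ 2 + 2 * c ^ 2 * α - β * c) / x
      - c * (c - 1) / x ^ 2 + 2 * c ^ 2 / x ^ 3) * f x
    + ((β * c - β + 2 * c * α) * x + (c - 1) * (2 * c * α - c - 2 * β)
      + (-β - 2 * c ^ 2 * α + β * c + 2 * c ^ 2) / x
      + c * (c - 1) / x ^ 2 - 2 * c ^ 2 / x ^ 3) * f (-x)
    + (2 * (x ^ 2 - 1) * (c ^ 2 - x ^ 2) / x ^ 2) * deriv f x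
    - (2 * c * (1 + x) * (x - 1) ^ 2 * (x + c) / x ^ 2) * deriv f (-x)

def P6 (p0 p1 p2 p3 p4 p5 t : ℝ) : ℝ :=
  (p0 + p1*t + p2*t^2 + p3*t^3 + p4*t^4 + p5*t^5) / t^3

def dP6 (p0 p1 p2 p3 p4 p5 t : ℝ) : ℝ :=
  (p1 + 2*p2*t + 3*p3*t^2 + 4*p4*t^3 + 5*p5*t^4) / t^3
    - 3*(p0 + p1*t + p2*t^2 + p3*t^3 + p4*t^4 + p5*t^5) / t^4

lemma hasDerivAt_P6 (p0 p1 p2 p3 p4 p5 : ℝ) {y : ℝ} (hy : y ≠ 0) :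
    HasDerivAt (fun t => P6 p0 p1 p2 p3 p4 p5 t) (dP6 p0 p1 p2 p3 p4 p5 y) y := by
  have hp : HasDerivAt (fun t : ℝ => p0 + p1*t + p2*t^2 + p3*t^3 + p4*t^4 + p5*t^5)
      (p1 + 2*p2*y + 3*p3*y^2 + 4*p4*y^3 + 5*p5*y^4) y := by
    have h := (((((hasDerivAt_const y p0).add ((hasDerivAt_id y).const_mul p1)).add
      ((hasDerivAt_pow 2 y).const_mul p2)).add ((hasDerivAt_pow 3 y).const_mul p3)).add
      ((hasDerivAt_pow 4 y).const_mul p4)).add ((hasDerivAt_pow 5 y).const_mul p5)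
    refine h.congr_deriv ?_
    push_cast; ring
  have h := hp.div (hasDerivAt_pow 3 y) (pow_ne_zero 3 hy)
  refine h.congr_deriv ?_
  unfold dP6; field_simp; ring

lemma hasDerivAt_op (a b cc d : ℝ → ℝ) (a' b' c' d' : ℝ) (f : ℝ → ℝ)
    (hf : ContDiff ℝ (⊤ : ℕ∞) f) (y : ℝ)
    (ha : HasDerivAt a a' y) (hb : HasDerivAt b b' y)
    (hc : HasDerivAt cc c' y) (hd : HasDerivAt d d' y) :
    HasDerivAt (fun t => a t * f t + b t * f (-t) + cc t * deriv f t + d t * deriv f (-t))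
      (a' * f y + a y * deriv f y + b' * f (-y) - b y * deriv f (-y)
        + c' * deriv f y + cc y * deriv (deriv f) y
        + d' * deriv f (-y) - d y * deriv (deriv f) (-y)) y := by
  have hf0 : ContDiff ℝ (↑(⊤:ℕ∞)) f := hf.of_le (by simp)
  obtain ⟨hf1, hf2⟩ := contDiff_infty_iff_deriv.mp hf0
  obtain ⟨hf1', _⟩ := contDiff_infty_iff_deriv.mp hf2
  have hfy : HasDerivAt f (deriv f y) y := (hf1 y).hasDerivAt
  have hfny : HasDerivAt (fun t => f (-t)) (-(deriv f (-y))) y := by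
    have := ((hf1 (-y)).hasDerivAt).comp y (hasDerivAt_neg y)
    exact this.congr_deriv (by simp)
  have hgy : HasDerivAt (deriv f) (deriv (deriv f) y) y := (hf1' y).hasDerivAt
  have hgny : HasDerivAt (fun t => deriv f (-t)) (-(deriv (deriv f) (-y))) y := by
    have := ((hf1' (-y)).hasDerivAt).comp y (hasDerivAt_neg y)
    exact this.congr_deriv (by simp)
  have h := (((ha.mul hfy).add (hb.mul hfny)).add (hc.mul hgy)).add (hd.mul hgny)
  refine h.congr_deriv ?_
  ring

lemma deriv_Lop (α β c : ℝ) (f : ℝ → ℝ) (hf : ContDiff ℝ (⊤ : ℕ∞) f) {y : ℝ} (hy : y ≠ 0) :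
    deriv (Lop α β c f) y =
      dP6 0 (-c) (-(c*α-β)) (-(α+β+1)) 0 0 y * f y
      + P6 0 (-c) (-(c*α-β)) (-(α+β+1)) 0 0 y * deriv f y
      + dP6 0 c (c*α-β) (α+β+1) 0 0 y * f (-y)
      - P6 0 c (c*α-β) (α+β+1) 0 0 y * deriv f (-y)
      + dP6 0 0 0 0 0 0 y * deriv f y + P6 0 0 0 0 0 0 y * deriv (deriv f) y
      + dP6 0 0 (2*c) (-(2*(c-1))) (-2) 0 y * deriv f (-y)
      - P6 0 0 (2*c) (-(2*(c-1))) (-2) 0 y * deriv (deriv f) (-y) := by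
  have h := hasDerivAt_op _ _ _ _ _ _ _ _ f hf y
    (hasDerivAt_P6 0 (-c) (-(c*α-β)) (-(α+β+1)) 0 0 hy)
    (hasDerivAt_P6 0 c (c*α-β) (α+β+1) 0 0 hy)
    (hasDerivAt_P6 0 0 0 0 0 0 hy)
    (hasDerivAt_P6 0 0 (2*c) (-(2*(c-1))) (-2) 0 hy)
  have hev : Lop α β c f =ᶠ[nhds y]
      (fun t => P6 0 (-c) (-(c*α-β)) (-(α+β+1)) 0 0 t * f t
        + P6 0 c (c*α-β) (α+β+1) 0 0 t * f (-t)
        + P6 0 0 0 0 0 0 t * deriv f t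
        + P6 0 0 (2*c) (-(2*(c-1))) (-2) 0 t * deriv f (-t)) := by
    filter_upwards [isOpen_compl_singleton.mem_nhds
      (show y ∈ ({0}ᶜ : Set ℝ) from hy)] with t ht
    have ht' : (t : ℝ) ≠ 0 := ht
    simp only [Lop, P6]
    field_simp
    ring
  rw [(h.congr_of_eventuallyEq hev).deriv]

lemma deriv_Rop (α β c : ℝ) (f : ℝ → ℝ) (hf : ContDiff ℝ (⊤ : ℕ∞) f) {y : ℝ} (hy : y ≠ 0) :
    deriv (Rop α β c f) y =
      dP6 (2*c^2) (-(c*(c-1))) (β-2*c^2+2*c^2*α-β*c) (-((c+2)*(c-1))) (β*c-β-2*α) 0 y * f y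
      + P6 (2*c^2) (-(c*(c-1))) (β-2*c^2+2*c^2*α-β*c) (-((c+2)*(c-1))) (β*c-β-2*α) 0 y * deriv f y
      + dP6 (-(2*c^2)) (c*(c-1)) (-β-2*c^2*α+β*c+2*c^2) ((c-1)*(2*c*α-c-2*β)) (β*c-β+2*c*α) 0 y * f (-y)
      - P6 (-(2*c^2)) (c*(c-1)) (-β-2*c^2*α+β*c+2*c^2) ((c-1)*(2*c*α-c-2*β)) (β*c-β+2*c*α) 0 y * deriv f (-y)
      + dP6 0 (-(2*c^2)) 0 (2*c^2+2) 0 (-2) y * deriv f y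
      + P6 0 (-(2*c^2)) 0 (2*c^2+2) 0 (-2) y * deriv (deriv f) y
      + dP6 0 (-(2*c^2)) (2*c^2-2*c) (2*c+2*c^2) (2*c-2*c^2) (-(2*c)) y * deriv f (-y)
      - P6 0 (-(2*c^2)) (2*c^2-2*c) (2*c+2*c^2) (2*c-2*c^2) (-(2*c)) y * deriv (deriv f) (-y) := by
  have h := hasDerivAt_op _ _ _ _ _ _ _ _ f hf y
    (hasDerivAt_P6 (2*c^2) (-(c*(c-1))) (β-2*c^2+2*c^2*α-β*c) (-((c+2)*(c-1))) (β*c-β-2*α) 0 hy)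
    (hasDerivAt_P6 (-(2*c^2)) (c*(c-1)) (-β-2*c^2*α+β*c+2*c^2) ((c-1)*(2*c*α-c-2*β)) (β*c-β+2*c*α) 0 hy)
    (hasDerivAt_P6 0 (-(2*c^2)) 0 (2*c^2+2) 0 (-2) hy)
    (hasDerivAt_P6 0 (-(2*c^2)) (2*c^2-2*c) (2*c+2*c^2) (2*c-2*c^2) (-(2*c)) hy)
  have hev : Rop α β c f =ᶠ[nhds y]
      (fun t => P6 (2*c^2) (-(c*(c-1))) (β-2*c^2+2*c^2*α-β*c) (-((c+2)*(c-1))) (β*c-β-2*α) 0 t * f t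
        + P6 (-(2*c^2)) (c*(c-1)) (-β-2*c^2*α+β*c+2*c^2) ((c-1)*(2*c*α-c-2*β)) (β*c-β+2*c*α) 0 t * f (-t)
        + P6 0 (-(2*c^2)) 0 (2*c^2+2) 0 (-2) t * deriv f t
        + P6 0 (-(2*c^2)) (2*c^2-2*c) (2*c+2*c^2) (2*c-2*c^2) (-(2*c)) t * deriv f (-t)) := by
    filter_upwards [isOpen_compl_singleton.mem_nhds
      (show y ∈ ({0}ᶜ : Set ℝ) from hy)] with t ht
    have ht' : (t : ℝ) ≠ 0 := ht
    simp only [Rop, P6]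
    field_simp
    ring
  rw [(h.congr_of_eventuallyEq hev).deriv]

set_option maxHeartbeats 2000000 in
/-- The intertwining relation
`L^{(α-2,β,c)} 𝔕 + 𝔕 L^{(α,β,c)} + 2(α+β) 𝔕 = 0`. -/
theorem LR_intertwining (α β c : ℝ) (f : ℝ → ℝ) (hf : ContDiff ℝ (⊤ : ℕ∞) f)
    (x : ℝ) (hx : x ≠ 0) :
    Lop (α - 2) β c (Rop α β c f) x + Rop α β c (Lop α β c f) x
      + 2 * (α + β) * Rop α β c f x = 0 := by
  have hx' : (-x : ℝ) ≠ 0 := neg_ne_zero.mpr hx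
  have h1 := deriv_Lop α β c f hf hx
  have h2 := deriv_Lop α β c f hf hx'
  have h3 := deriv_Rop α β c f hf hx'
  have hRf : ContDiff ℝ (⊤ : ℕ∞) f := hf
  simp only [Lop, Rop]
  rw [h1, h2, h3]
  simp only [P6, dP6, neg_neg]
  field_simp
  ring
end
end
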